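/- The piecewise linear map T on [2/3, 2] defined by T(x) = 2x for x ∈ [2/3, 1] and T(x) = (2/3)x for x ∈ (1, 2] has no periodic points: there is no x ∈ [2/3, 2] and n ≥ 1 with Tⁿ(x) = x. -/

import Mathlib

open Set

/-- The piecewise linear map T on [2/3, 2]. -/
noncomputable def T (x : ℝ) : ℝ := if x ≤ 1 then 2 * x else (2 / 3) * x

/-! Each step of `T` multiplies by `2` or by `2/3`, so `T^[n] x = 2 ^ a * (2/3) ^ b * x` with
`a + b = n`. A period `n ≥ 1` would therefore force `2 ^ n = 3 ^ b`, which parity forbids. -/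

lemma T_eq_or (x : ℝ) : T x = 2 * x ∨ T x = (2 / 3) * x := by
  unfold T
  split_ifs
  · exact .inl rfl
  · exact .inr rfl

lemma exists_iterate_eq_pow_mul_pow_mul {f : ℝ → ℝ} {c d : ℝ}
    (hf : ∀ x, f x = c * x ∨ f x = d * x) (n : ℕ) (x : ℝ) :
    ∃ a b : ℕ, a + b = n ∧ f^[n] x = c ^ a * d ^ b * x := by
  induction n with
  | zero => exact ⟨0, 0, rfl, by simp⟩
  | succ n ih =>
    obtain ⟨a, b, hab, h⟩ := ih
    rw [Function.iterate_succ_apply', h]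
    rcases hf (c ^ a * d ^ b * x) with hc | hd
    · exact ⟨a + 1, b, by omega, by rw [hc]; ring⟩
    · exact ⟨a, b + 1, by omega, by rw [hd]; ring⟩

lemma two_pow_ne_three_pow {m : ℕ} (hm : m ≠ 0) (k : ℕ) : 2 ^ m ≠ 3 ^ k := by
  intro h
  have heven : Even (2 ^ m) := (Nat.even_pow' hm).mpr even_two
  have hodd : Odd (3 ^ k) := Odd.pow (by decide)
  exact Nat.not_even_iff_odd.mpr hodd (h ▸ heven)

lemma two_pow_mul_two_thirds_pow_ne_one {a b : ℕ} (hab : a + b ≠ 0) :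
    (2 : ℝ) ^ a * (2 / 3) ^ b ≠ 1 := by
  intro h
  have hreal : (2 : ℝ) ^ (a + b) = 3 ^ b := by
    rw [div_pow, mul_div_assoc', div_eq_one_iff_eq (by positivity)] at h
    rw [pow_add, h]
  exact two_pow_ne_three_pow hab b (by exact_mod_cast hreal)

theorem T_no_periodic_points :
    ¬ ∃ x ∈ Icc (2 / 3 : ℝ) 2, ∃ n : ℕ, 1 ≤ n ∧ T^[n] x = x := by
  rintro ⟨x, hx, n, hn, hfix⟩
  have hx0 : x ≠ 0 := (lt_of_lt_of_le (by norm_num) hx.1).ne'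
  obtain ⟨a, b, rfl, hiter⟩ := exists_iterate_eq_pow_mul_pow_mul T_eq_or n x
  have hone : (2 : ℝ) ^ a * (2 / 3) ^ b = 1 :=
    mul_right_cancel₀ hx0 (by rw [← hiter, hfix, one_mul])
  exact two_pow_mul_two_thirds_pow_ne_one (by omega) hone
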